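/- arXiv:1907.02281 — 3 statements merged into one kernel-verified Lean document; each statement's English description precedes it below -/
import Mathlib

section
/- Let $D > 2s > 0$ and let $G : [0,\infty) \to [0,\infty)$ be a non-increasing function. Then $\frac{D}{D-2s} \int_0^\infty t^{2s/(D-2s)} G(t)\, dt \le \left( \int_0^\infty G(t)^{(D-2s)/D} dt \right)^{D/(D-2s)}$. -/
open MeasureTheory Set ENNReal

/-!
Write `g = G ^ ((D - 2s)/D)` and `e = 2s/(D - 2s)`, so that the claim reads
`(e + 1) ∫ t^e g(t)^(e+1) ≤ (∫ g)^(e+1)`. As `g` is non-increasing, `t g(t) ≤ F(t) := ∫₀ᵗ g`,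
hence `t^e g^(e+1) ≤ F^e g = F^e F'`, whose integral is `(∫ g)^(e+1)/(e+1)`. To avoid
differentiating `F`, this last step is carried out for the measure `ν = g dt`: by the layer-cake
formula and the tail bound `ν {F > y} ≤ ν(ℝ) - y`, the integral `∫ F^e dν` is at most
`∫₀^{ν(ℝ)} x^e dx`.
-/

section DistributionFunction

variable (ν : Measure ℝ) [IsFiniteMeasure ν]

lemma le_measure_setOf_measure_Iio_le {c : ℝ≥0∞} (hc : ∃ t, c < ν (Iio t)) :
    c ≤ ν {t | ν (Iio t) ≤ c} := by
  set S := {t | c < ν (Iio t)}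
  have hS_up : ∀ ⦃t u⦄, t ∈ S → t ≤ u → u ∈ S := fun t u ht htu =>
    ht.trans_le (measure_mono (Iio_subset_Iio htu))
  have hS_compl : ∀ t, t ∉ S → ν (Iio t) ≤ c := fun t ht => not_lt.mp ht
  -- `S` is an up-set: its complement is `Iio (sInf S)`, `Iic (sInf S)` or empty.
  by_cases hbdd : BddBelow S
  · set t₀ := sInf S
    by_cases ht₀ : t₀ ∈ S
    · calc c ≤ ν (Iio t₀) := le_of_lt ht₀
        _ ≤ _ := measure_mono fun x (hx : x < t₀) =>
            hS_compl x fun hxS => (csInf_le hbdd hxS).not_gt hx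
    · have hlim := tendsto_measure_biInter_gt (μ := ν) (s := Iio) (a := t₀)
        (fun r _ => measurableSet_Iio.nullMeasurableSet) (fun i j _ hij => Iio_subset_Iio hij)
        ⟨t₀ + 1, by simp, measure_ne_top ν _⟩
      have hIic : ⋂ r > t₀, Iio r = Iic t₀ := by
        ext x
        simpa using forall_gt_iff_le
      rw [hIic] at hlim
      calc c ≤ ν (Iic t₀) := by
            refine ge_of_tendsto hlim (eventually_nhdsWithin_of_forall fun r hr => ?_)
            obtain ⟨u, huS, hur⟩ := exists_lt_of_csInf_lt hc hr
            exact (hS_up huS hur.le).le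
        _ ≤ _ := measure_mono fun x (hx : x ≤ t₀) =>
            hS_compl x fun hxS => ht₀ (le_antisymm hx (csInf_le hbdd hxS) ▸ hxS)
  · have hS_univ : ∀ t, t ∈ S := fun t => by
      obtain ⟨u, huS, hut⟩ := not_bddBelow_iff.mp hbdd t
      exact hS_up huS hut.le
    have hlim := tendsto_measure_iInter_atBot (μ := ν) (s := Iio)
      (fun r => measurableSet_Iio.nullMeasurableSet) (fun i j hij => Iio_subset_Iio hij)
      ⟨0, measure_ne_top ν _⟩
    rw [show ⋂ t : ℝ, Iio t = ∅ from
      eq_empty_of_forall_notMem fun x hx => lt_irrefl x (mem_iInter.mp hx x),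
      measure_empty] at hlim
    exact (ge_of_tendsto' hlim fun t => (hS_univ t).le).trans zero_le

lemma measure_setOf_lt_measure_Iio_le (c : ℝ≥0∞) :
    ν {t | c < ν (Iio t)} ≤ ν univ - c := by
  rcases eq_empty_or_nonempty {t | c < ν (Iio t)} with hS | hS
  · simp [hS]
  have hmeas : MeasurableSet {t | ν (Iio t) ≤ c} :=
    measurableSet_le (Monotone.measurable fun _ _ h => measure_mono (Iio_subset_Iio h))
      measurable_const
  have hcompl : {t | c < ν (Iio t)} = {t | ν (Iio t) ≤ c}ᶜ := by
    ext; simp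
  rw [hcompl, measure_compl hmeas (measure_ne_top ν _)]
  exact tsub_le_tsub_left (le_measure_setOf_measure_Iio_le ν hS) _

end DistributionFunction

lemma ofReal_add_one_mul_lintegral_Ioc_rpow {a e : ℝ} (ha : 0 ≤ a) (he : -1 < e) :
    ENNReal.ofReal (e + 1) * ∫⁻ x in Ioc 0 a, ENNReal.ofReal (x ^ e) =
      ENNReal.ofReal (a ^ (e + 1)) := by
  have hint : IntegrableOn (fun x : ℝ => x ^ e) (Ioc 0 a) :=
    (intervalIntegral.intervalIntegrable_rpow' he).1
  have hnn : 0 ≤ᵐ[volume.restrict (Ioc 0 a)] fun x : ℝ => x ^ e :=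
    ae_restrict_of_forall_mem measurableSet_Ioc fun x hx => Real.rpow_nonneg hx.1.le e
  rw [← ofReal_integral_eq_lintegral_ofReal hint hnn, ← intervalIntegral.integral_of_le ha,
    integral_rpow (Or.inl he), Real.zero_rpow (by linarith), sub_zero,
    ← ENNReal.ofReal_mul (by linarith), mul_div_cancel₀ _ (by linarith)]

theorem ofReal_add_one_mul_lintegral_measure_Iio_rpow_le (ν : Measure ℝ) {e : ℝ} (he : 0 < e) :
    ENNReal.ofReal (e + 1) * ∫⁻ t, ν (Iio t) ^ e ∂ν ≤ ν univ ^ (e + 1) := by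
  by_cases hfin : ν univ = ∞
  · simp [hfin, ENNReal.top_rpow_of_pos (by linarith : 0 < e + 1)]
  have : IsFiniteMeasure ν := ⟨lt_top_iff_ne_top.mpr hfin⟩
  set a := (ν univ).toReal
  set F : ℝ → ℝ := fun t => (ν (Iio t)).toReal
  have hF_mono : Monotone F := fun t u h =>
    toReal_mono (measure_ne_top ν _) (measure_mono (Iio_subset_Iio h))
  have htail : ∀ y ∈ Ioi (0 : ℝ),
      ν {t | y < F t} ≤ volume.restrict (Ioc 0 a) (Ioi y) := by
    intro y (hy : 0 < y)
    have hset : {t | y < F t} = {t | ENNReal.ofReal y < ν (Iio t)} := by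
      ext t
      exact (ofReal_lt_iff_lt_toReal hy.le (measure_ne_top ν _)).symm
    calc ν {t | y < F t} ≤ ν univ - ENNReal.ofReal y := by
          rw [hset]; exact measure_setOf_lt_measure_Iio_le ν _
      _ = volume.restrict (Ioc 0 a) (Ioi y) := by
          rw [Measure.restrict_apply measurableSet_Ioi, inter_comm, Ioc_inter_Ioi,
            max_eq_right hy.le, Real.volume_Ioc, ofReal_sub _ hy.le, ofReal_toReal hfin]
  calc ENNReal.ofReal (e + 1) * ∫⁻ t, ν (Iio t) ^ e ∂ν
      = ENNReal.ofReal (e + 1) * ∫⁻ t, ENNReal.ofReal (F t ^ e) ∂ν := by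
        simp_rw [F, ← ofReal_rpow_of_nonneg toReal_nonneg he.le,
          ofReal_toReal (measure_ne_top ν _)]
    _ = ENNReal.ofReal (e + 1) * (ENNReal.ofReal e *
          ∫⁻ y in Ioi 0, ν {t | y < F t} * ENNReal.ofReal (y ^ (e - 1))) := by
        rw [lintegral_rpow_eq_lintegral_meas_lt_mul ν (ae_of_all _ fun _ => toReal_nonneg)
          hF_mono.measurable.aemeasurable he]
    _ ≤ ENNReal.ofReal (e + 1) * (ENNReal.ofReal e * ∫⁻ y in Ioi 0,
          volume.restrict (Ioc 0 a) (Ioi y) * ENNReal.ofReal (y ^ (e - 1))) := by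
        gcongr _ * (_ * ?_)
        exact setLIntegral_mono' measurableSet_Ioi fun y hy => mul_le_mul_left (htail y hy) _
    _ = ENNReal.ofReal (e + 1) * ∫⁻ x in Ioc 0 a, ENNReal.ofReal (x ^ e) := by
        congr 1
        exact (lintegral_rpow_eq_lintegral_meas_lt_mul _ (f := id) (ae_restrict_of_forall_mem
          measurableSet_Ioc fun x hx => hx.1.le) measurable_id.aemeasurable he).symm
    _ = ν univ ^ (e + 1) := by
        rw [ofReal_add_one_mul_lintegral_Ioc_rpow toReal_nonneg (by linarith),
          ← ofReal_rpow_of_nonneg toReal_nonneg (by linarith), ofReal_toReal hfin]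

lemma ofReal_mul_le_setLIntegral_Ioo_of_antitoneOn {g : ℝ → ℝ≥0∞} (hg : AntitoneOn g (Ioi 0))
    {t : ℝ} (ht : 0 < t) : ENNReal.ofReal t * g t ≤ ∫⁻ u in Ioo 0 t, g u :=
  calc ENNReal.ofReal t * g t = ∫⁻ _ in Ioo 0 t, g t := by
        rw [setLIntegral_const, Real.volume_Ioo, sub_zero, mul_comm]
    _ ≤ ∫⁻ u in Ioo 0 t, g u :=
        setLIntegral_mono' measurableSet_Ioo fun u hu => hg hu.1 ht hu.2.le

theorem ofReal_add_one_mul_lintegral_rpow_mul_rpow_le_of_antitoneOn {g : ℝ → ℝ≥0∞}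
    (hg_meas : Measurable g) (hg_anti : AntitoneOn g (Ioi 0)) {e : ℝ} (he : 0 < e) :
    ENNReal.ofReal (e + 1) * ∫⁻ t in Ioi 0, ENNReal.ofReal t ^ e * g t ^ (e + 1) ≤
      (∫⁻ t in Ioi 0, g t) ^ (e + 1) := by
  set ν := (volume.restrict (Ioi (0 : ℝ))).withDensity g
  have hν_Iio : ∀ t, ν (Iio t) = ∫⁻ u in Ioo 0 t, g u := fun t => by
    rw [withDensity_apply _ measurableSet_Iio, Measure.restrict_restrict measurableSet_Iio,
      inter_comm, Ioi_inter_Iio]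
  have hν_univ : ν univ = ∫⁻ t in Ioi 0, g t := by
    rw [withDensity_apply _ MeasurableSet.univ, Measure.restrict_univ]
  have hpointwise : ∀ t ∈ Ioi (0 : ℝ),
      ENNReal.ofReal t ^ e * g t ^ (e + 1) ≤ ν (Iio t) ^ e * g t := fun t ht =>
    calc ENNReal.ofReal t ^ e * g t ^ (e + 1) = (ENNReal.ofReal t * g t) ^ e * g t := by
          rw [mul_rpow_of_nonneg _ _ he.le, rpow_add_of_nonneg _ _ he.le zero_le_one, rpow_one,
            mul_assoc]
      _ ≤ ν (Iio t) ^ e * g t := by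
          rw [hν_Iio]
          gcongr
          exact ofReal_mul_le_setLIntegral_Ioo_of_antitoneOn hg_anti ht
  have hIio_meas : Measurable fun t => ν (Iio t) ^ e :=
    Monotone.measurable fun t u h => by gcongr
  calc ENNReal.ofReal (e + 1) * ∫⁻ t in Ioi 0, ENNReal.ofReal t ^ e * g t ^ (e + 1)
      ≤ ENNReal.ofReal (e + 1) * ∫⁻ t in Ioi 0, ν (Iio t) ^ e * g t := by
        gcongr _ * ?_
        exact setLIntegral_mono' measurableSet_Ioi hpointwise
    _ = ENNReal.ofReal (e + 1) * ∫⁻ t, ν (Iio t) ^ e ∂ν := by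
        rw [lintegral_withDensity_eq_lintegral_mul _ hg_meas hIio_meas]
        simp only [Pi.mul_apply, mul_comm]
    _ ≤ ν univ ^ (e + 1) := ofReal_add_one_mul_lintegral_measure_Iio_rpow_le ν he
    _ = (∫⁻ t in Ioi 0, g t) ^ (e + 1) := by rw [hν_univ]

/-- For `D > 2s > 0` and a non-increasing function `G : [0,∞) → [0,∞)`,
`(D/(D-2s)) ∫₀^∞ t^(2s/(D-2s)) G(t) dt ≤ (∫₀^∞ G(t)^((D-2s)/D) dt)^(D/(D-2s))`. -/
theorem stmt0 (D s : ℝ) (hs : 0 < 2 * s) (hD : 2 * s < D)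
    (G : ℝ → ℝ) (hGmeas : Measurable G)
    (hGnonneg : ∀ t, 0 ≤ t → 0 ≤ G t)
    (hGanti : AntitoneOn G (Set.Ici 0)) :
    ENNReal.ofReal (D / (D - 2 * s)) *
        ∫⁻ t in Set.Ioi (0 : ℝ), ENNReal.ofReal (t ^ (2 * s / (D - 2 * s)) * G t) ≤
      (∫⁻ t in Set.Ioi (0 : ℝ), ENNReal.ofReal (G t ^ ((D - 2 * s) / D))) ^ (D / (D - 2 * s)) := by
  set q := (D - 2 * s) / D
  set e := 2 * s / (D - 2 * s)
  have hDs : 0 < D - 2 * s := by linarith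
  have he : 0 < e := div_pos hs hDs
  have hD0 : 0 < D := by linarith
  have hexp : D / (D - 2 * s) = e + 1 := by simp only [e]; field_simp; ring
  have hqe : q * (e + 1) = 1 := by rw [← hexp]; simp only [q]; field_simp
  have hG_eq : ∀ t ∈ Ioi (0 : ℝ), ENNReal.ofReal (t ^ e * G t) =
      ENNReal.ofReal t ^ e * ENNReal.ofReal (G t ^ q) ^ (e + 1) := fun t (ht : 0 < t) => by
    have hG := hGnonneg t ht.le
    rw [ofReal_rpow_of_nonneg (Real.rpow_nonneg hG q) (by linarith), ← Real.rpow_mul hG, hqe,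
      Real.rpow_one, ofReal_rpow_of_nonneg ht.le he.le, ENNReal.ofReal_mul (by positivity)]
  have hg_anti : AntitoneOn (fun t => ENNReal.ofReal (G t ^ q)) (Ioi 0) :=
    fun u (hu : 0 < u) v (hv : 0 < v) huv => ENNReal.ofReal_le_ofReal <|
      Real.rpow_le_rpow (hGnonneg v hv.le) (hGanti hu.le hv.le huv) (div_pos hDs hD0).le
  rw [hexp, setLIntegral_congr_fun measurableSet_Ioi hG_eq]
  exact ofReal_add_one_mul_lintegral_rpow_mul_rpow_le_of_antitoneOn
    (hGmeas.pow_const q).ennreal_ofReal hg_anti he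
end

section
/- Let $m \ge 0$, $a > 0$, $b > 0$, $D > 0$ and $0 < s < D/2$. Suppose that for every $t > 0$ one has $m \le a\, t^s + b\, m^2\, t^{-D/2}$. Then there exists a constant $c > 0$, depending only on $s$, $D$ and $b$, such that $a \ge c\, m^{(D-2s)/D}$. -/
/-!
Test the hypothesis at the time `t = (2 b m)^{2/D}`, where the second term equals `m / 2`.
It leaves `m / 2 ≤ a (2 b m)^{2s/D}`, which is `a ≥ c m^{1 - 2s/D}` with `c = (2b)^{-2s/D} / 2`.
-/

open Real

namespace Real

lemma rpow_two_div_rpow_neg_half {x D : ℝ} (hx : 0 ≤ x) (hD : D ≠ 0) :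
    (x ^ (2 / D)) ^ (-(D / 2)) = x⁻¹ := by
  rw [← rpow_mul hx, show 2 / D * -(D / 2) = -1 by field_simp, rpow_neg_one]

lemma rpow_two_div_rpow {x D : ℝ} (hx : 0 ≤ x) (s : ℝ) :
    (x ^ (2 / D)) ^ s = x ^ (2 * s / D) := by
  rw [← rpow_mul hx, div_mul_eq_mul_div]

end Real

lemma half_le_mul_rpow_of_forall_le_add {s D b m a : ℝ} (hD : D ≠ 0) (hb : 0 < b) (hm : 0 < m)
    (h : ∀ t : ℝ, 0 < t → m ≤ a * t ^ s + b * m ^ 2 * t ^ (-(D / 2))) :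
    m / 2 ≤ a * (2 * b * m) ^ (2 * s / D) := by
  have hbm : 0 < 2 * b * m := by positivity
  have key := h _ (rpow_pos_of_pos hbm (2 / D))
  have second_term : b * m ^ 2 * ((2 * b * m) ^ (2 / D)) ^ (-(D / 2)) = m / 2 := by
    rw [rpow_two_div_rpow_neg_half hbm.le hD]
    field_simp
  rw [rpow_two_div_rpow hbm.le, second_term] at key
  linarith

lemma div_mul_rpow_le_of_half_le {s D b m a : ℝ} (hD : D ≠ 0) (hb : 0 < b) (hm : 0 < m)
    (h : m / 2 ≤ a * (2 * b * m) ^ (2 * s / D)) :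
    (2 * b) ^ (-(2 * s / D)) / 2 * m ^ ((D - 2 * s) / D) ≤ a := by
  have hbm : 0 < (2 * b * m) ^ (2 * s / D) := by positivity
  have lhs_eq : (2 * b) ^ (-(2 * s / D)) / 2 * m ^ ((D - 2 * s) / D)
      = m / 2 / (2 * b * m) ^ (2 * s / D) := by
    rw [show (D - 2 * s) / D = 1 - 2 * s / D by field_simp, rpow_sub hm, rpow_one,
      mul_rpow (by positivity) hm.le, rpow_neg (by positivity)]
    field_simp
  rw [lhs_eq, div_le_iff₀ hbm]
  exact h

/-- If `m ≤ a t^s + b m² t^{-D/2}` for all `t > 0`, with `0 < 2s < D`,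
`a, b > 0`, `m ≥ 0`, then `a ≥ c m^{(D-2s)/D}` for a constant `c = c(s,D,b) > 0`. -/
theorem stmt9 (s D b : ℝ) (hs : 0 < s) (hsD : 2 * s < D) (hb : 0 < b) :
    ∃ c : ℝ, 0 < c ∧ ∀ m a : ℝ, 0 ≤ m → 0 < a →
      (∀ t : ℝ, 0 < t → m ≤ a * t ^ s + b * m ^ 2 * t ^ (-(D / 2))) →
      c * m ^ ((D - 2 * s) / D) ≤ a := by
  have hD : 0 < D := by linarith
  refine ⟨(2 * b) ^ (-(2 * s / D)) / 2, by positivity, fun m a hm ha h => ?_⟩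
  rcases hm.eq_or_lt with rfl | hm
  · rw [zero_rpow (div_ne_zero (by linarith) hD.ne'), mul_zero]
    exact ha.le
  · exact div_mul_rpow_le_of_half_le hD.ne' hb hm
      (half_le_mul_rpow_of_forall_le_add hD.ne' hb hm h)
end

section
/- Under the hypotheses (a)-(d) of the previous kernel setup (stochastic normalization in $Y$, mass $e^{-t\beta}$ in $X$ with $\beta\ge 0$, Chapman-Kolmogorov, and $\int p(X,Y,t)^2 dX = a_N e^{-t\beta}/V(t)$), for every measurable $E\subset\mathbb{R}^N$ with $|E|<\infty$ and every $t>0$ one has $\|P_t\mathbf{1}_E - \mathbf{1}_E\|_{L^1} \ge |E| - \frac{2a_N}{V(t/2)} e^{-\frac{t}{4}\beta}\, |E|^2$. -/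
/-!
Since `0 ≤ P_t 1_E ≤ 1`, pointwise `|P_t 1_E - 1_E| = 1_E + P_t 1_E - 2 · 1_E P_t 1_E`, and
integrating (Tonelli for the column mass) gives
`‖P_t 1_E - 1_E‖₁ = |E| + e^{-tβ}|E| - 2 ∫_E P_t 1_E`.
Splitting `p(·,·,t)` at `t/2` by Chapman–Kolmogorov, Cauchy–Schwarz and the `L²` identity bound
`∫_E p(X,Z,t/2) dX ≤ (a_N e^{-tβ/2} |E| / V(t/2))^{1/2}` uniformly in `Z`, and the column mass
handles the other factor, so `∫_E P_t 1_E ≤ (a_N |E| / V(t/2))^{1/2} e^{-3tβ/4} |E|`.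
AM–GM together with `e^{-tβ/4} ≤ 1` trades this for
`(a_N / V(t/2)) e^{-tβ/4} |E|² + e^{-tβ}|E| / 2`, and the `e^{-tβ}|E|` terms cancel.
-/

open MeasureTheory Set Function
open scoped ENNReal

section
variable {α : Type*} [MeasurableSpace α] {μ : Measure α}

lemma lintegral_ofReal_eq_of_integral_eq {f : α → ℝ} {c : ℝ} (hf : ∀ x, 0 ≤ f x) (hc : c ≠ 0)
    (h : ∫ x, f x ∂μ = c) : ∫⁻ x, ENNReal.ofReal (f x) ∂μ = ENNReal.ofReal c := by
  rw [← ofReal_integral_eq_lintegral_ofReal (Integrable.of_integral_ne_zero (h ▸ hc))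
    (ae_of_all _ hf), h]

lemma ofReal_integral_le_lintegral_ofReal {f : α → ℝ} (hf : ∀ x, 0 ≤ f x) :
    ENNReal.ofReal (∫ x, f x ∂μ) ≤ ∫⁻ x, ENNReal.ofReal (f x) ∂μ := by
  calc ENNReal.ofReal (∫ x, f x ∂μ) = ‖∫ x, f x ∂μ‖ₑ :=
        (Real.enorm_of_nonneg (integral_nonneg hf)).symm
    _ ≤ ∫⁻ x, ‖f x‖ₑ ∂μ := enorm_integral_le_lintegral_enorm f
    _ = ∫⁻ x, ENNReal.ofReal (f x) ∂μ := by simp_rw [Real.enorm_of_nonneg (hf _)]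

lemma integral_abs_sub_indicator_one {f : α → ℝ} {E : Set α} (hE : MeasurableSet E)
    (hμE : μ E ≠ ∞) (hf : Integrable f μ) (hf0 : ∀ x, 0 ≤ f x) (hf1 : ∀ x, f x ≤ 1) :
    ∫ x, |f x - E.indicator (fun _ => (1 : ℝ)) x| ∂μ
      = μ.real E + ∫ x, f x ∂μ - 2 * ∫ x in E, f x ∂μ := by
  have hpt : ∀ x, |f x - E.indicator (fun _ => (1 : ℝ)) x|
      = E.indicator (fun _ => (1 : ℝ)) x + f x - 2 * E.indicator f x := by
    intro x
    by_cases hx : x ∈ E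
    · simp only [indicator_of_mem hx, abs_of_nonpos (sub_nonpos.2 (hf1 x))]; ring
    · simp only [indicator_of_notMem hx, sub_zero, abs_of_nonneg (hf0 x)]; ring
  have h1 : Integrable (E.indicator fun _ => (1 : ℝ)) μ :=
    (integrable_indicator_iff hE).2 (integrableOn_const hμE)
  simp_rw [hpt]
  rw [integral_sub (f := fun x => E.indicator (fun _ => (1 : ℝ)) x + f x) (h1.add hf)
      ((hf.indicator hE).const_mul 2), integral_add h1 hf,
    integral_const_mul, integral_indicator hE, integral_indicator hE, setIntegral_const,
    smul_eq_mul, mul_one]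

lemma sq_setLIntegral_le_setLIntegral_sq_mul {f : α → ℝ≥0∞} (hf : AEMeasurable f μ) (E : Set α) :
    (∫⁻ x in E, f x ∂μ) ^ 2 ≤ (∫⁻ x in E, f x ^ 2 ∂μ) * μ E := by
  have h := ENNReal.lintegral_mul_le_Lp_mul_Lq (μ.restrict E) Real.HolderConjugate.two_two
    hf.restrict (aemeasurable_const (b := (1 : ℝ≥0∞)))
  simp only [Pi.mul_apply, mul_one, ENNReal.one_rpow, lintegral_one,
    Measure.restrict_apply_univ] at h
  calc (∫⁻ x in E, f x ∂μ) ^ 2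
      ≤ ((∫⁻ x in E, f x ^ (2 : ℝ) ∂μ) ^ (1 / 2 : ℝ) * μ E ^ (1 / 2 : ℝ)) ^ 2 := by gcongr
    _ = (∫⁻ x in E, f x ^ 2 ∂μ) * μ E := by
      rw [mul_pow, ← ENNReal.rpow_mul_natCast, ← ENNReal.rpow_mul_natCast]
      norm_num

end

section
variable {α : Type*} [MeasurableSpace α] {μ : Measure α} [SFinite μ] {k₁ k₂ : α → α → ℝ≥0∞}

lemma setLIntegral_setLIntegral_lintegral_mul (h₁ : Measurable (uncurry k₁))
    (h₂ : Measurable (uncurry k₂)) (E F : Set α) :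
    ∫⁻ x in E, ∫⁻ y in F, ∫⁻ z, k₁ x z * k₂ z y ∂μ ∂μ ∂μ
      = ∫⁻ z, (∫⁻ x in E, k₁ x z ∂μ) * ∫⁻ y in F, k₂ z y ∂μ ∂μ := by
  have hF : Measurable fun z => ∫⁻ y in F, k₂ z y ∂μ := h₂.lintegral_prod_right'
  calc ∫⁻ x in E, ∫⁻ y in F, ∫⁻ z, k₁ x z * k₂ z y ∂μ ∂μ ∂μ
      = ∫⁻ x in E, ∫⁻ z, k₁ x z * ∫⁻ y in F, k₂ z y ∂μ ∂μ ∂μ := by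
        refine lintegral_congr fun x => ?_
        rw [lintegral_lintegral_swap ((h₁.comp (measurable_const.prodMk measurable_snd)).mul
          (h₂.comp measurable_swap)).aemeasurable]
        exact lintegral_congr fun z =>
          lintegral_const_mul _ (h₂.comp (measurable_const.prodMk measurable_id))
    _ = ∫⁻ z, ∫⁻ x in E, k₁ x z * ∫⁻ y in F, k₂ z y ∂μ ∂μ ∂μ :=
        lintegral_lintegral_swap (h₁.mul (hF.comp measurable_snd)).aemeasurable
    _ = ∫⁻ z, (∫⁻ x in E, k₁ x z ∂μ) * ∫⁻ y in F, k₂ z y ∂μ ∂μ :=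
        lintegral_congr fun z =>
          lintegral_mul_const _ (h₁.comp (measurable_id.prodMk measurable_const))

lemma setLIntegral_setLIntegral_lintegral_mul_le {b c : ℝ≥0∞}
    (h₁ : Measurable (uncurry k₁)) (h₂ : Measurable (uncurry k₂)) (E : Set α)
    (hb : ∀ z, ∫⁻ x in E, k₁ x z ∂μ ≤ b) (hc : ∀ y, ∫⁻ z, k₂ z y ∂μ ≤ c) :
    ∫⁻ x in E, ∫⁻ y in E, ∫⁻ z, k₁ x z * k₂ z y ∂μ ∂μ ∂μ ≤ b * (c * μ E) := by
  rw [setLIntegral_setLIntegral_lintegral_mul h₁ h₂]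
  calc ∫⁻ z, (∫⁻ x in E, k₁ x z ∂μ) * ∫⁻ y in E, k₂ z y ∂μ ∂μ
      ≤ ∫⁻ z, b * ∫⁻ y in E, k₂ z y ∂μ ∂μ := lintegral_mono fun z => by gcongr; exact hb z
    _ = b * ∫⁻ y in E, ∫⁻ z, k₂ z y ∂μ ∂μ := by
      have hF : Measurable fun z => ∫⁻ y in E, k₂ z y ∂μ := h₂.lintegral_prod_right'
      rw [lintegral_const_mul _ hF, lintegral_lintegral_swap h₂.aemeasurable]
    _ ≤ b * ∫⁻ _ in E, c ∂μ := by gcongr with y; exact hc y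
    _ = b * (c * μ E) := by rw [setLIntegral_const]

variable {p q : α → α → ℝ} {E : Set α} {c : ℝ}

lemma integral_abs_setIntegral_sub_indicator (hp : Measurable (uncurry p))
    (hp0 : ∀ x y, 0 ≤ p x y) (hrow : ∀ x, ∫ y, p x y ∂μ = 1) (hcol : ∀ y, ∫ x, p x y ∂μ = c)
    (hc : 0 < c) (hE : MeasurableSet E) (hμE : μ E ≠ ∞) :
    ∫ x, |∫ y in E, p x y ∂μ - E.indicator (fun _ => (1 : ℝ)) x| ∂μ
      = μ.real E + c * μ.real E - 2 * ∫ x in E, ∫ y in E, p x y ∂μ ∂μ := by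
  set φ := fun x => ∫ y in E, p x y ∂μ
  have hint : ∀ x, Integrable (p x) μ := fun x =>
    Integrable.of_integral_ne_zero ((hrow x).symm ▸ one_ne_zero)
  have hφ0 : ∀ x, 0 ≤ φ x := fun x => integral_nonneg (hp0 x)
  have hφ1 : ∀ x, φ x ≤ 1 := fun x =>
    (hrow x) ▸ setIntegral_le_integral (hint x) (ae_of_all _ (hp0 x))
  have hφm : StronglyMeasurable φ := hp.stronglyMeasurable.integral_prod_right'
  have hφlint : ∫⁻ x, ENNReal.ofReal (φ x) ∂μ = ENNReal.ofReal c * μ E := by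
    calc ∫⁻ x, ENNReal.ofReal (φ x) ∂μ = ∫⁻ x, ∫⁻ y in E, ENNReal.ofReal (p x y) ∂μ ∂μ :=
          lintegral_congr fun x =>
            ofReal_integral_eq_lintegral_ofReal (hint x).integrableOn (ae_of_all _ (hp0 x))
      _ = ∫⁻ y in E, ∫⁻ x, ENNReal.ofReal (p x y) ∂μ ∂μ :=
          lintegral_lintegral_swap hp.ennreal_ofReal.aemeasurable
      _ = ENNReal.ofReal c * μ E := by
          rw [setLIntegral_congr_fun hE fun y _ =>
            lintegral_ofReal_eq_of_integral_eq (hp0 · y) hc.ne' (hcol y), setLIntegral_const]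
  have hφint : Integrable φ μ := by
    refine ⟨hφm.aestronglyMeasurable, ?_⟩
    rw [hasFiniteIntegral_iff_ofReal (ae_of_all _ hφ0), hφlint]
    exact ENNReal.mul_lt_top ENNReal.ofReal_lt_top hμE.lt_top
  have hφintegral : ∫ x, φ x ∂μ = c * μ.real E := by
    rw [integral_eq_lintegral_of_nonneg_ae (ae_of_all _ hφ0) hφm.aestronglyMeasurable, hφlint,
      ENNReal.toReal_mul, ENNReal.toReal_ofReal hc.le, measureReal_def]
  rw [integral_abs_sub_indicator_one hE hμE hφint hφ0 hφ1, hφintegral]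

lemma setIntegral_setIntegral_le_of_chapmanKolmogorov {L : ℝ} (hp : Measurable (uncurry p))
    (hp0 : ∀ x y, 0 ≤ p x y) (hq : Measurable (uncurry q)) (hq0 : ∀ x y, 0 ≤ q x y)
    (hck : ∀ x y, p x y = ∫ z, q x z * q z y ∂μ) (hcol : ∀ y, ∫ x, q x y ∂μ = c) (hc : 0 < c)
    (hL2 : ∀ y, ∫ x, q x y ^ 2 ∂μ = L) (hL : 0 < L) (hμE : μ E ≠ ∞) :
    ∫ x in E, ∫ y in E, p x y ∂μ ∂μ ≤ √(L * μ.real E) * (c * μ.real E) := by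
  set k := fun x y => ENNReal.ofReal (q x y)
  have hk_le : ∀ x y, ENNReal.ofReal (p x y) ≤ ∫⁻ z, k x z * k z y ∂μ := fun x y => by
    simp only [k, hck, ← ENNReal.ofReal_mul (hq0 _ _)]
    exact ofReal_integral_le_lintegral_ofReal fun z => mul_nonneg (hq0 _ _) (hq0 _ _)
  have hcolumn : ∀ z, ∫⁻ x in E, k x z ∂μ ≤ ENNReal.ofReal √(L * μ.real E) := fun z => by
    refine (ENNReal.pow_le_pow_left_iff two_ne_zero).1 ?_
    calc (∫⁻ x in E, k x z ∂μ) ^ 2 ≤ (∫⁻ x in E, k x z ^ 2 ∂μ) * μ E :=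
          sq_setLIntegral_le_setLIntegral_sq_mul
            (hq.comp (measurable_id.prodMk measurable_const)).ennreal_ofReal.aemeasurable E
      _ ≤ (∫⁻ x, ENNReal.ofReal (q x z ^ 2) ∂μ) * μ E := by
          simp only [k, ← ENNReal.ofReal_pow (hq0 _ _)]
          gcongr
          exact Measure.restrict_le_self
      _ = ENNReal.ofReal √(L * μ.real E) ^ 2 := by
          rw [lintegral_ofReal_eq_of_integral_eq (fun x => sq_nonneg _) hL.ne' (hL2 z),
            ← ENNReal.ofReal_pow (Real.sqrt_nonneg _), Real.sq_sqrt (by positivity),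
            ENNReal.ofReal_mul hL.le, ofReal_measureReal hμE]
  have hrow : ∀ y, ∫⁻ z, k z y ∂μ ≤ ENNReal.ofReal c := fun y =>
    (lintegral_ofReal_eq_of_integral_eq (hq0 · y) hc.ne' (hcol y)).le
  have hK := setLIntegral_setLIntegral_lintegral_mul_le hq.ennreal_ofReal hq.ennreal_ofReal E
    hcolumn hrow
  have hφ : ∀ x, ENNReal.ofReal (∫ y in E, p x y ∂μ) ≤ ∫⁻ y in E, ∫⁻ z, k x z * k z y ∂μ ∂μ :=
    fun x => (ofReal_integral_le_lintegral_ofReal (hp0 x)).trans (lintegral_mono (hk_le x))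
  have hφm : StronglyMeasurable fun x => ∫ y in E, p x y ∂μ :=
    hp.stronglyMeasurable.integral_prod_right'
  rw [integral_eq_lintegral_of_nonneg_ae (ae_of_all _ fun x => integral_nonneg (hp0 x))
    hφm.aestronglyMeasurable]
  calc (∫⁻ x in E, ENNReal.ofReal (∫ y in E, p x y ∂μ) ∂μ).toReal
      ≤ (ENNReal.ofReal √(L * μ.real E) * (ENNReal.ofReal c * μ E)).toReal :=
        ENNReal.toReal_mono (by finiteness) ((lintegral_mono hφ).trans hK)
    _ = √(L * μ.real E) * (c * μ.real E) := by
        rw [ENNReal.toReal_mul, ENNReal.toReal_mul, ENNReal.toReal_ofReal (Real.sqrt_nonneg _),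
          ENNReal.toReal_ofReal hc.le, measureReal_def]

end

lemma two_mul_sqrt_mul_le {C A m : ℝ} (hC : 0 ≤ C) (hA0 : 0 < A) (hA1 : A ≤ 1) (hm : 0 ≤ m) :
    2 * (√(C * A ^ 2 * m) * (A ^ 2 * m)) ≤ 2 * C * A * m ^ 2 + A ^ 4 * m := by
  set u := √(C * A ^ 2 * m)
  have hu : u ^ 2 = C * A ^ 2 * m := Real.sq_sqrt (by positivity)
  have hA65 : A ^ 6 ≤ A ^ 5 := pow_le_pow_of_le_one hA0.le hA1 (by norm_num)
  have hA5 : 0 ≤ A ^ 5 := by positivity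
  rw [← mul_le_mul_iff_right₀ hA0]
  nlinarith [mul_nonneg hm (sq_nonneg (2 * u - A ^ 3)), mul_nonneg hm (sub_nonneg.2 hA65),
    mul_nonneg hm hA5, congrArg (· * m ^ 2) hu]

/-- STATEMENT 14: Under the kernel hypotheses (stochastic normalization in `Y`, mass
`e^{-tβ}` in `X` with `β ≥ 0`, Chapman–Kolmogorov, and `∫ p(X,Y,t)² dX = a_N e^{-tβ}/V(t)`),
for every measurable `E` of finite measure and every `t > 0`,
`‖P_t 1_E - 1_E‖_{L¹} ≥ |E| - (2a_N / V(t/2)) e^{-tβ/4} |E|²`. -/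
theorem stmt15 (N : ℕ) (p : EuclideanSpace ℝ (Fin N) → EuclideanSpace ℝ (Fin N) → ℝ → ℝ)
    (β aN : ℝ) (hβ : 0 ≤ β) (haN : 0 < aN) (V : ℝ → ℝ) (hV : ∀ t : ℝ, 0 < t → 0 < V t)
    (hpmeas : ∀ t : ℝ, 0 < t →
      Measurable (fun q : EuclideanSpace ℝ (Fin N) × EuclideanSpace ℝ (Fin N) => p q.1 q.2 t))
    (hppos : ∀ X Y : EuclideanSpace ℝ (Fin N), ∀ t : ℝ, 0 < t → 0 < p X Y t)
    (hmass : ∀ (X : EuclideanSpace ℝ (Fin N)) (t : ℝ), 0 < t → ∫ Y, p X Y t = 1)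
    (hmass' : ∀ (Y : EuclideanSpace ℝ (Fin N)) (t : ℝ), 0 < t →
      ∫ X, p X Y t = Real.exp (-t * β))
    (hck : ∀ (X Y : EuclideanSpace ℝ (Fin N)) (t s : ℝ), 0 < t → 0 < s →
      p X Y (t + s) = ∫ Z, p X Z t * p Z Y s)
    (hL2 : ∀ (Y : EuclideanSpace ℝ (Fin N)) (t : ℝ), 0 < t →
      ∫ X, (p X Y t) ^ 2 = aN * Real.exp (-t * β) / V t)
    (E : Set (EuclideanSpace ℝ (Fin N))) (hE : MeasurableSet E) (hEfin : volume E < ⊤)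
    (t : ℝ) (ht : 0 < t) :
    (volume E).toReal - 2 * aN / V (t / 2) * Real.exp (-(t / 4) * β) * (volume E).toReal ^ 2 ≤
      ∫ X, |(∫ Y in E, p X Y t) - E.indicator (fun _ => (1 : ℝ)) X| := by
  have ht2 : 0 < t / 2 := half_pos ht
  have hA2 : Real.exp (-(t / 2) * β) = Real.exp (-(t / 4) * β) ^ 2 := by
    rw [← Real.exp_nat_mul]; ring_nf
  have hA4 : Real.exp (-t * β) = Real.exp (-(t / 4) * β) ^ 4 := by
    rw [← Real.exp_nat_mul]; ring_nf
  rw [integral_abs_setIntegral_sub_indicator (hpmeas t ht) (fun X Y => (hppos X Y t ht).le)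
    (hmass · t ht) (hmass' · t ht) (Real.exp_pos _) hE hEfin.ne, hA4, ← measureReal_def]
  have hI := setIntegral_setIntegral_le_of_chapmanKolmogorov (p := fun X Y => p X Y t)
    (q := fun X Y => p X Y (t / 2)) (hpmeas t ht) (fun X Y => (hppos X Y t ht).le)
    (hpmeas _ ht2) (fun X Y => (hppos X Y _ ht2).le)
    (fun X Y => by rw [← hck X Y _ _ ht2 ht2, add_halves]) (hmass' · _ ht2) (Real.exp_pos _)
    (hL2 · _ ht2) (div_pos (mul_pos haN (Real.exp_pos _)) (hV _ ht2)) hEfin.ne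
  beta_reduce at hI
  rw [hA2, mul_div_right_comm] at hI
  have hAM := two_mul_sqrt_mul_le (div_pos haN (hV _ ht2)).le (Real.exp_pos (-(t / 4) * β))
    (Real.exp_le_one_iff.2 (by nlinarith)) (measureReal_nonneg (μ := volume) (s := E))
  rw [mul_div_assoc]
  linarith
end
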